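/- Every Sturmian word is recurrent: if w has complexity p_w(n) = n+1 for all n, then every factor of w occurs infinitely many times in w. -/

import Mathlib

/-!
If a factor `u` of length `n` of `w` stopped occurring after position `N`, the suffix of `w`
starting at `N` would have at most `n` factors of length `n`. By Morse–Hedlund that suffix, and
hence `w`, is eventually periodic, so the complexity of `w` is bounded, contradicting
`p_w(n) = n + 1`. Morse–Hedlund itself: since `p(0) = 1`, a word with `p(n) ≤ n` has some `m`
with `p(m + 1) ≤ p(m)`; then every factor of length `m` extends uniquely to the right, so two
occurrences of the same factor of length `m` (pigeonhole) continue identically forever.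
-/

def factorAt {A : Type*} (w : ℕ → A) (i n : ℕ) : List A :=
  (List.range n).map fun k => w (i + k)

def factors {A : Type*} (w : ℕ → A) (n : ℕ) : Set (List A) :=
  {u | ∃ i, u = factorAt w i n}

noncomputable def complexity {A : Type*} (w : ℕ → A) (n : ℕ) : ℕ :=
  (factors w n).ncard

open Function

section Factors

variable {A : Type*} (w : ℕ → A)

lemma length_factorAt (i n : ℕ) : (factorAt w i n).length = n := by
  simp [factorAt]

lemma factorAt_succ (i m : ℕ) : factorAt w i (m + 1) = factorAt w i m ++ [w (i + m)] := by
  simp [factorAt, List.range_succ]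

lemma factorAt_succ' (i m : ℕ) : factorAt w i (m + 1) = w i :: factorAt w (i + 1) m := by
  simp [factorAt, List.range_succ_eq_map, Nat.add_assoc, Nat.add_comm 1]

lemma factorAt_shift (N i n : ℕ) : factorAt (fun s => w (N + s)) i n = factorAt w (N + i) n := by
  simp [factorAt, Nat.add_assoc]

lemma factors_finite [Finite A] (n : ℕ) : (factors w n).Finite := by
  refine (Set.finite_range (List.ofFn : (Fin n → A) → List A)).subset ?_
  rintro _ ⟨i, rfl⟩
  exact ⟨fun k => w (i + k), List.ext_getElem (by simp [factorAt]) (by simp [factorAt])⟩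

lemma image_take_factors_succ (m : ℕ) :
    (List.take m) '' factors w (m + 1) = factors w m := by
  have take_succ (i : ℕ) : (factorAt w i (m + 1)).take m = factorAt w i m := by
    rw [factorAt_succ, List.take_left' (length_factorAt w i m)]
  ext u
  constructor
  · rintro ⟨_, ⟨i, rfl⟩, rfl⟩
    exact ⟨i, take_succ i⟩
  · rintro ⟨i, rfl⟩
    exact ⟨_, ⟨i, rfl⟩, take_succ i⟩

lemma complexity_zero : complexity w 0 = 1 := by
  have : factors w 0 = {[]} := by
    ext u
    simp [factors, factorAt]
  rw [complexity, this, Set.ncard_singleton]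

end Factors

section MorseHedlund

variable {A : Type*} (w : ℕ → A)

lemma exists_complexity_succ_le_of_complexity_le {n : ℕ} (hn : complexity w n ≤ n) :
    ∃ m, complexity w (m + 1) ≤ complexity w m := by
  by_contra! hgrow
  have (k : ℕ) : k + 1 ≤ complexity w k := by
    induction k with
    | zero => rw [complexity_zero]
    | succ k ih => exact Nat.succ_le_of_lt (ih.trans_lt (hgrow k))
  have := this n
  omega

variable [Finite A] {m : ℕ}

lemma factorAt_succ_eq_of_factorAt_eq (hm : complexity w (m + 1) ≤ complexity w m) {i j : ℕ}
    (h : factorAt w i m = factorAt w j m) : factorAt w i (m + 1) = factorAt w j (m + 1) := by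
  have hcard : ((List.take m) '' factors w (m + 1)).ncard = (factors w (m + 1)).ncard := by
    rw [image_take_factors_succ]
    exact le_antisymm
      (by rw [← image_take_factors_succ]; exact Set.ncard_image_le (factors_finite w _)) hm
  refine Set.injOn_of_ncard_image_eq hcard (factors_finite w _) ⟨i, rfl⟩ ⟨j, rfl⟩ ?_
  simpa only [factorAt_succ, List.take_left' (length_factorAt w _ m)] using h

lemma apply_add_eq_of_factorAt_eq (hm : complexity w (m + 1) ≤ complexity w m) {i j : ℕ}
    (h : factorAt w i m = factorAt w j m) (t : ℕ) : w (i + t) = w (j + t) := by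
  have step {a b : ℕ} (hab : factorAt w a m = factorAt w b m) :
      w a = w b ∧ factorAt w (a + 1) m = factorAt w (b + 1) m := by
    simpa only [factorAt_succ', List.cons.injEq] using
      factorAt_succ_eq_of_factorAt_eq w hm hab
  have hfactor (t : ℕ) : factorAt w (i + t) m = factorAt w (j + t) m := by
    induction t with
    | zero => exact h
    | succ t ih => exact (step ih).2
  exact (step (hfactor t)).1

lemma exists_periodic_of_complexity_succ_le (hm : complexity w (m + 1) ≤ complexity w m) :
    ∃ M p, 0 < p ∧ Periodic (fun s => w (M + s)) p := by
  obtain ⟨i, -, j, -, hij, h⟩ := Set.infinite_univ.exists_lt_map_eq_of_mapsTo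
    (f := (factorAt w · m)) (t := factors w m) (fun i _ => ⟨i, rfl⟩) (factors_finite w m)
  refine ⟨i, j - i, Nat.sub_pos_of_lt hij, fun s => ?_⟩
  change w (i + (s + (j - i))) = w (i + s)
  rw [show i + (s + (j - i)) = j + s by omega]
  exact (apply_add_eq_of_factorAt_eq w hm h s).symm

theorem exists_periodic_of_complexity_le {n : ℕ} (hn : complexity w n ≤ n) :
    ∃ M p, 0 < p ∧ Periodic (fun s => w (M + s)) p :=
  have ⟨_, hm⟩ := exists_complexity_succ_le_of_complexity_le w hn
  exists_periodic_of_complexity_succ_le w hm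

end MorseHedlund

section Recurrence

variable {A : Type*} (w : ℕ → A)

lemma complexity_le_of_periodic {M p : ℕ} (hp : 0 < p) (hper : Periodic (fun s => w (M + s)) p)
    (n : ℕ) : complexity w n ≤ M + p := by
  have hper_factor : Periodic (fun s => factorAt w (M + s) n) p := fun s => by
    simp only [factorAt, ← Nat.add_assoc]
    congr 1
    funext k
    simpa only [Nat.add_right_comm _ p, Nat.add_assoc] using hper (s + k)
  have hsub : factors w n ⊆ (factorAt w · n) '' Set.Iio (M + p) := by
    rintro _ ⟨i, rfl⟩
    rcases lt_or_ge i M with hi | hi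
    · exact ⟨i, by simp only [Set.mem_Iio]; omega, rfl⟩
    · refine ⟨M + (i - M) % p, by simpa using Nat.mod_lt _ hp, ?_⟩
      simpa only [Nat.add_sub_cancel' hi] using hper_factor.map_mod_nat (i - M)
  calc complexity w n ≤ ((factorAt w · n) '' Set.Iio (M + p)).ncard :=
        Set.ncard_le_ncard hsub ((Set.finite_Iio _).image _)
    _ ≤ (Set.Iio (M + p)).ncard := Set.ncard_image_le (Set.finite_Iio _)
    _ = M + p := by rw [← Finset.coe_Iio, Set.ncard_coe_finset, Nat.card_Iio]

lemma complexity_shift_lt [Finite A] {n N : ℕ} {u : List A} (hu : u ∈ factors w n)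
    (hN : ∀ i, N ≤ i → factorAt w i n ≠ u) :
    complexity (fun s => w (N + s)) n < complexity w n := by
  have hsub : factors (fun s => w (N + s)) n ⊆ factors w n := by
    rintro _ ⟨i, rfl⟩
    exact ⟨N + i, factorAt_shift w N i n⟩
  refine Set.ncard_lt_ncard ((Set.ssubset_iff_of_subset hsub).2 ⟨u, hu, ?_⟩) (factors_finite w n)
  rintro ⟨i, rfl⟩
  exact hN (N + i) (Nat.le_add_right N i) (factorAt_shift w N i n).symm

end Recurrence

theorem stmt4 {A : Type*} [Fintype A] (w : ℕ → A)
    (h : ∀ n, complexity w n = n + 1) :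
    ∀ n, ∀ u ∈ factors w n, {i : ℕ | factorAt w i n = u}.Infinite := by
  intro n u hu
  by_contra hfin
  obtain ⟨N, hN⟩ := (Set.not_infinite.1 hfin).bddAbove
  have hshift : complexity (fun s => w (N + 1 + s)) n ≤ n := by
    have := complexity_shift_lt w (N := N + 1) hu fun i hi hiu => absurd (hN hiu) (by omega)
    rw [h] at this
    omega
  obtain ⟨M, p, hp, hper⟩ := exists_periodic_of_complexity_le _ hshift
  have hbound := complexity_le_of_periodic w hp (M := N + 1 + M)
    (by simpa only [Nat.add_assoc] using hper) (N + 1 + M + p)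
  rw [h] at hbound
  omega
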